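/- Let r > 0, let v : B_r → ℝ be continuously differentiable on the Euclidean disk B_r ⊂ ℝ², let M be a real 2×2 matrix, a ∈ ℝ² and c ∈ ℝ, and define g : B_r \ {0} → ℝ by g(x) = ⟨x, M a⟩/(2π|x|²) + (c/2π) log|x|. Then lim_{s→0⁺} ∫_0^{2π} [ v(γ_s(φ)) ∂_r g(γ_s(φ)) − g(γ_s(φ)) ∂_r v(γ_s(φ)) ] s dφ = c·v(0) − ⟨M a, ∇v(0)⟩, where γ_s(φ) = (s cos φ, s sin φ) and ∂_r f(x) = ⟨x/|x|, ∇f(x)⟩ denotes the radial derivative. -/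

import Mathlib

/-!
On the circle of radius `s`, with `ω = (cos φ, sin φ)` and `b = M a`, one has
`g = ⟪ω, b⟫ / (2π s) + (c / 2π) log s` and `s ∂_r g = c / 2π - ⟪ω, b⟫ / (2π s)`, so the only
singular part of the integrand is `-⟪ω, b⟫ v(sω) / (2π s)`. Since `⟪ω, b⟫` has mean zero, `v(sω)`
may be replaced by `v(sω) - v(0)`, and the integrand becomes a difference quotient of `v` plus
regular terms. This regularized integrand is jointly continuous in `(s, φ)` up to `s = 0`, where
it equals `c v(0) / 2π - ⟪ω, b⟫ ⟪ω, ∇v(0)⟫ / π`; the limit then follows from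
`∫ ⟪ω, x⟫ ⟪ω, y⟫ dφ = π ⟪x, y⟫`.
-/

noncomputable section

open Real Set Filter MeasureTheory
open scoped RealInnerProductSpace Topology

abbrev E2 : Type := EuclideanSpace ℝ (Fin 2)

def matVec (M : Matrix (Fin 2) (Fin 2) ℝ) (v : E2) : E2 :=
  (WithLp.equiv 2 (Fin 2 → ℝ)).symm (M.mulVec ((WithLp.equiv 2 (Fin 2 → ℝ)) v))

def circlePt (s φ : ℝ) : E2 := WithLp.toLp 2 ![s * Real.cos φ, s * Real.sin φ]

def radDeriv (f : E2 → ℝ) (x : E2) : ℝ := ⟪‖x‖⁻¹ • x, gradient f x⟫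

section Parametric

open Asymptotics

variable {X Y E F : Type*} [TopologicalSpace X] [TopologicalSpace Y]
  [NormedAddCommGroup E] [NormedSpace ℝ E] [NormedAddCommGroup F] [NormedSpace ℝ F]

theorem continuousOn_parametric_intervalIntegral_of_continuousOn {f : X → ℝ → E} {S : Set X}
    (hf : ContinuousOn (Function.uncurry f) (S ×ˢ univ)) (a b : ℝ) :
    ContinuousOn (fun x => ∫ t in a..b, f x t) S := by
  rw [continuousOn_iff_continuous_domRestrict]
  have : Continuous (Function.uncurry fun (x : S) t => f x t) :=
    hf.comp_continuous (f := fun p : S × ℝ => ((p.1 : X), p.2)) (by fun_prop)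
      fun p => ⟨p.1.2, trivial⟩
  exact intervalIntegral.continuous_parametric_intervalIntegral_of_continuous' this a b

/-- At `s = 0` both sides are `f' u`: the remainder term vanishes because `0⁻¹ = 0`. -/
theorem HasFDerivAt.dslope_smul_eq {f : E → F} {f' : E →L[ℝ] F} (hf : HasFDerivAt f f' 0)
    (s : ℝ) (u : E) :
    dslope (fun t : ℝ => f (t • u)) 0 s = f' u + s⁻¹ • (f (s • u) - f 0 - f' (s • u)) := by
  rcases eq_or_ne s 0 with rfl | hs
  · have hu : HasDerivAt (fun t : ℝ => f (t • u)) (f' u) 0 := by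
      have := (zero_smul ℝ u).symm ▸ hf
      simpa [Function.comp_def] using
        this.comp_hasDerivAt (0 : ℝ) ((hasDerivAt_id (0 : ℝ)).smul_const u)
    simp [dslope_same, hu.deriv]
  · rw [dslope_of_ne _ hs, slope_def_module, map_smul, zero_smul, sub_zero]
    simp only [smul_sub, smul_smul, inv_mul_cancel₀ hs, one_smul]
    abel

theorem HasFDerivAt.continuousAt_dslope_smul {f : E → F} {f' : E →L[ℝ] F}
    (hf : HasFDerivAt f f' 0) {u : Y → E} {y₀ : Y} (hu : ContinuousAt u y₀) :
    ContinuousAt (fun p : ℝ × Y => dslope (fun t => f (t • u p.2)) 0 p.1) (0, y₀) := by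
  set R : E → F := fun x => f x - f 0 - f' x
  have hR : R =o[𝓝 0] fun x => x := by
    simpa only [zero_add] using hasFDerivAt_iff_isLittleO_nhds_zero.mp hf
  have hsu : Tendsto (fun p : ℝ × Y => p.1 • u p.2) (𝓝 (0, y₀)) (𝓝 0) := by
    have : ContinuousAt (fun p : ℝ × Y => p.1 • u p.2) (0, y₀) :=
      continuousAt_fst.smul (hu.comp continuousAt_snd)
    simpa using this.tendsto
  have hu_bdd : (fun p : ℝ × Y => p.1⁻¹ • p.1 • u p.2) =O[𝓝 (0, y₀)] fun _ => (1 : ℝ) := by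
    refine (IsBigO.of_bound 1 (Eventually.of_forall fun p => ?_)).trans
      ((hu.comp (continuousAt_snd (p := ((0 : ℝ), y₀)))).tendsto.isBigO_one ℝ)
    rw [smul_smul, norm_smul, one_mul]
    refine mul_le_of_le_one_left (norm_nonneg _) ?_
    rcases eq_or_ne p.1 0 with h | h <;> simp [h]
  have hrem : Tendsto (fun p : ℝ × Y => p.1⁻¹ • R (p.1 • u p.2)) (𝓝 (0, y₀)) (𝓝 0) :=
    (isLittleO_one_iff ℝ).mp
      (((isBigO_refl _ _).smul_isLittleO (hR.comp_tendsto hsu)).trans_isBigO hu_bdd)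
  have hlin : ContinuousAt (fun p : ℝ × Y => f' (u p.2)) (0, y₀) :=
    f'.continuous.continuousAt.comp (hu.comp continuousAt_snd)
  simp only [ContinuousAt, hf.dslope_smul_eq]
  simpa [R] using hlin.tendsto.add hrem

theorem continuousOn_dslope_smul {f : E → F} {f' : E →L[ℝ] F} {V : Set E} (hV : IsOpen V)
    (hfV : ContinuousOn f V) (hf : HasFDerivAt f f' 0) {u : Y → E} (hu : Continuous u) :
    ContinuousOn (fun p : ℝ × Y => dslope (fun t => f (t • u p.2)) 0 p.1)
      {p | p.1 • u p.2 ∈ V} := by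
  rintro ⟨s, y⟩ hp
  refine ContinuousAt.continuousWithinAt ?_
  rcases eq_or_ne s 0 with rfl | hs
  · exact hf.continuousAt_dslope_smul hu.continuousAt
  have hsu : ContinuousAt (fun p : ℝ × Y => p.1 • u p.2) (s, y) :=
    (continuous_fst.smul (hu.comp continuous_snd)).continuousAt
  have hslope : ContinuousAt (fun p : ℝ × Y => p.1⁻¹ • (f (p.1 • u p.2) - f 0)) (s, y) :=
    (continuousAt_fst.inv₀ hs).smul
      (((hfV.continuousAt (hV.mem_nhds hp)).comp_of_eq hsu rfl).sub
        continuousAt_const)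
  refine hslope.congr ?_
  filter_upwards [continuousAt_fst.eventually_ne hs] with p hp
  rw [dslope_of_ne _ hp, slope_def_module, zero_smul, sub_zero]

end Parametric

theorem circlePt_eq_smul (s φ : ℝ) : circlePt s φ = s • circlePt 1 φ := by
  ext i; fin_cases i <;> simp [circlePt]

@[simp]
theorem circlePt_zero (φ : ℝ) : circlePt 0 φ = 0 := by
  rw [circlePt_eq_smul, zero_smul]

@[simp]
theorem norm_circlePt_one (φ : ℝ) : ‖circlePt 1 φ‖ = 1 := by
  simp [circlePt, EuclideanSpace.norm_eq, Fin.sum_univ_two]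

@[simp]
theorem norm_circlePt (s φ : ℝ) : ‖circlePt s φ‖ = |s| := by
  rw [circlePt_eq_smul, norm_smul, norm_circlePt_one, mul_one, Real.norm_eq_abs]

theorem continuous_circlePt : Continuous fun p : ℝ × ℝ => circlePt p.1 p.2 := by
  unfold circlePt; fun_prop

@[fun_prop]
theorem continuous_circlePt_one : Continuous (circlePt 1) :=
  continuous_circlePt.comp (continuous_const.prodMk continuous_id)

theorem hasDerivAt_circlePt (s φ : ℝ) : HasDerivAt (fun t => circlePt t φ) (circlePt 1 φ) s := by
  rw [show (fun t => circlePt t φ) = fun t => t • circlePt 1 φ from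
    funext fun t => circlePt_eq_smul t φ]
  simpa using (hasDerivAt_id s).smul_const (circlePt 1 φ)

theorem inner_circlePt_one (φ : ℝ) (x : E2) :
    ⟪circlePt 1 φ, x⟫ = x 0 * cos φ + x 1 * sin φ := by
  simp [circlePt, EuclideanSpace.inner_eq_star_dotProduct, Fin.sum_univ_two, dotProduct]

theorem integral_inner_circlePt_one (x : E2) : ∫ φ in 0..2 * π, ⟪circlePt 1 φ, x⟫ = 0 := by
  simp [inner_circlePt_one, intervalIntegral.integral_add]

theorem integral_inner_circlePt_one_mul_inner (x y : E2) :
    ∫ φ in 0..2 * π, ⟪circlePt 1 φ, x⟫ * ⟪circlePt 1 φ, y⟫ = π * ⟪x, y⟫ := by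
  have h : ∀ φ, ⟪circlePt 1 φ, x⟫ * ⟪circlePt 1 φ, y⟫ = x 0 * y 0 * cos φ ^ 2
      + (x 0 * y 1 + x 1 * y 0) * (sin φ * cos φ) + x 1 * y 1 * sin φ ^ 2 := fun φ => by
    rw [inner_circlePt_one, inner_circlePt_one]; ring
  have hi : ∀ f : ℝ → ℝ, Continuous f → IntervalIntegrable f volume 0 (2 * π) :=
    fun f hf => hf.intervalIntegrable _ _
  simp_rw [h]
  rw [intervalIntegral.integral_add (hi _ (by fun_prop)) (hi _ (by fun_prop)),
    intervalIntegral.integral_add (hi _ (by fun_prop)) (hi _ (by fun_prop))]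
  simp [integral_cos_sq, integral_sin_sq, integral_sin_mul_cos₁,
    EuclideanSpace.inner_eq_star_dotProduct, Fin.sum_univ_two, dotProduct]
  ring

theorem radDeriv_eq_fderiv (f : E2 → ℝ) (x : E2) :
    radDeriv f x = fderiv ℝ f x (‖x‖⁻¹ • x) := by
  simp [radDeriv, inner_gradient_right]

theorem radDeriv_circlePt (f : E2 → ℝ) {s : ℝ} (hs : 0 < s) (φ : ℝ) :
    radDeriv f (circlePt s φ) = fderiv ℝ f (circlePt s φ) (circlePt 1 φ) := by
  rw [radDeriv_eq_fderiv, norm_circlePt, abs_of_pos hs, circlePt_eq_smul s φ, smul_smul,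
    inv_mul_cancel₀ hs.ne', one_smul]

theorem fderiv_circlePt_one_eq_deriv {f : E2 → ℝ} {s φ : ℝ}
    (hf : DifferentiableAt ℝ f (circlePt s φ)) :
    fderiv ℝ f (circlePt s φ) (circlePt 1 φ) = deriv (fun t => f (circlePt t φ)) s :=
  (hf.hasFDerivAt.comp_hasDerivAt s (hasDerivAt_circlePt s φ)).deriv.symm

def dipoleLogPotential (b : E2) (c : ℝ) (x : E2) : ℝ :=
  ⟪x, b⟫ / (2 * π * ‖x‖ ^ 2) + c / (2 * π) * Real.log ‖x‖

theorem dipoleLogPotential_circlePt (b : E2) (c : ℝ) {s : ℝ} (hs : 0 < s) (φ : ℝ) :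
    dipoleLogPotential b c (circlePt s φ)
      = ⟪circlePt 1 φ, b⟫ / (2 * π * s) + c / (2 * π) * log s := by
  rw [dipoleLogPotential, norm_circlePt, abs_of_pos hs, circlePt_eq_smul s φ,
    real_inner_smul_left]
  field_simp

theorem differentiableAt_dipoleLogPotential (b : E2) (c : ℝ) {x : E2} (hx : x ≠ 0) :
    DifferentiableAt ℝ (dipoleLogPotential b c) x := by
  have := differentiableAt_id.norm ℝ hx
  have := differentiableAt_id.inner ℝ (differentiableAt_const b) (x := x)
  have : ‖x‖ ≠ 0 := norm_ne_zero_iff.mpr hx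
  unfold dipoleLogPotential
  fun_prop (disch := positivity)

theorem radDeriv_dipoleLogPotential_circlePt (b : E2) (c : ℝ) {s : ℝ} (hs : 0 < s) (φ : ℝ) :
    radDeriv (dipoleLogPotential b c) (circlePt s φ)
      = (c / (2 * π) - ⟪circlePt 1 φ, b⟫ / (2 * π * s)) / s := by
  have hx : circlePt s φ ≠ 0 := by simp [← norm_ne_zero_iff, hs.ne']
  rw [radDeriv_circlePt _ hs, fderiv_circlePt_one_eq_deriv
    (differentiableAt_dipoleLogPotential b c hx)]
  have hrad : HasDerivAt (fun t => ⟪circlePt 1 φ, b⟫ / (2 * π) * t⁻¹ + c / (2 * π) * log t)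
      (⟪circlePt 1 φ, b⟫ / (2 * π) * -(s ^ 2)⁻¹ + c / (2 * π) * s⁻¹) s :=
    ((hasDerivAt_inv hs.ne').const_mul _).add ((hasDerivAt_log hs.ne').const_mul _)
  rw [(hrad.congr_of_eventuallyEq ?_).deriv]
  · field_simp; ring
  filter_upwards [lt_mem_nhds hs] with t ht
  rw [dipoleLogPotential_circlePt b c ht]
  ring

/-- `s` times the flux integrand, minus its singular part `-v 0 ⟪ω, b⟫ / (2π s)` of zero mean. -/
def regularizedFlux (v : E2 → ℝ) (b : E2) (c s φ : ℝ) : ℝ :=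
  c / (2 * π) * v (circlePt s φ)
    - ⟪circlePt 1 φ, b⟫ / (2 * π) * (dslope (fun t => v (circlePt t φ)) 0 s
      + fderiv ℝ v (circlePt s φ) (circlePt 1 φ))
    - c / (2 * π) * (s * log s) * fderiv ℝ v (circlePt s φ) (circlePt 1 φ)

theorem flux_integrand_eq_regularizedFlux {r c s : ℝ} {b : E2} {v g : E2 → ℝ}
    (hg : ∀ x : E2, x ≠ 0 → ‖x‖ < r → g x = dipoleLogPotential b c x) (hs : s ∈ Ioo 0 r)
    (φ : ℝ) :
    (v (circlePt s φ) * radDeriv g (circlePt s φ)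
        - g (circlePt s φ) * radDeriv v (circlePt s φ)) * s
      = regularizedFlux v b c s φ - v 0 / (2 * π * s) * ⟪circlePt 1 φ, b⟫ := by
  have hns : ‖circlePt s φ‖ = s := by rw [norm_circlePt, abs_of_pos hs.1]
  have hx : circlePt s φ ≠ 0 := by rw [← norm_ne_zero_iff, hns]; exact hs.1.ne'
  have hxr : ‖circlePt s φ‖ < r := by rw [hns]; exact hs.2
  have hgP : g =ᶠ[𝓝 (circlePt s φ)] dipoleLogPotential b c := by
    filter_upwards [(isOpen_ne.inter (isOpen_lt continuous_norm continuous_const)).mem_nhds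
      (⟨hx, hxr⟩ : circlePt s φ ∈ {x : E2 | x ≠ 0} ∩ {x | ‖x‖ < r})]
      with x hx using hg x hx.1 hx.2
  have hrad : radDeriv g (circlePt s φ) = radDeriv (dipoleLogPotential b c) (circlePt s φ) := by
    simp only [radDeriv, hgP.gradient_eq]
  rw [hrad, radDeriv_dipoleLogPotential_circlePt b c hs.1, hg _ hx hxr,
    dipoleLogPotential_circlePt b c hs.1, radDeriv_circlePt v hs.1, regularizedFlux,
    dslope_of_ne _ hs.1.ne', slope_def_field, circlePt_zero]
  have : s ≠ 0 := hs.1.ne'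
  field_simp
  ring

theorem continuousOn_regularizedFlux {r : ℝ} (hr : 0 < r) {v : E2 → ℝ}
    (hv : ContDiffOn ℝ 1 v (Metric.ball 0 r)) (b : E2) (c : ℝ) :
    ContinuousOn (Function.uncurry (regularizedFlux v b c))
      (Metric.ball (0 : ℝ) r ×ˢ univ) := by
  have hmaps : MapsTo (fun p : ℝ × ℝ => circlePt p.1 p.2) (Metric.ball 0 r ×ˢ univ)
      (Metric.ball 0 r) := by
    rintro ⟨s, φ⟩ ⟨hs, -⟩
    simpa using hs
  have hv' : ContinuousOn (fun p : ℝ × ℝ => v (circlePt p.1 p.2)) (Metric.ball 0 r ×ˢ univ) :=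
    hv.continuousOn.comp continuous_circlePt.continuousOn hmaps
  have hDv : ContinuousOn (fun p : ℝ × ℝ => fderiv ℝ v (circlePt p.1 p.2) (circlePt 1 p.2))
      (Metric.ball 0 r ×ˢ univ) :=
    ((hv.continuousOn_fderiv_of_isOpen Metric.isOpen_ball le_rfl).comp
      continuous_circlePt.continuousOn hmaps).clm_apply
      (continuous_circlePt_one.comp continuous_snd).continuousOn
  have hslope : ContinuousOn (fun p : ℝ × ℝ => dslope (fun t => v (circlePt t p.2)) 0 p.1)
      (Metric.ball 0 r ×ˢ univ) := by
    have hv0 : HasFDerivAt v (fderiv ℝ v 0) 0 :=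
      ((hv.differentiableOn one_ne_zero).differentiableAt
        (Metric.ball_mem_nhds 0 hr)).hasFDerivAt
    refine ((continuousOn_dslope_smul Metric.isOpen_ball hv.continuousOn hv0
      continuous_circlePt_one).mono ?_).congr ?_
    · rintro p hp
      simpa [← circlePt_eq_smul] using hmaps hp
    · rintro p -
      simp only [← circlePt_eq_smul]
  have hinner : Continuous fun φ => ⟪circlePt 1 φ, b⟫ := by fun_prop
  have hlog : Continuous fun p : ℝ × ℝ => p.1 * log p.1 :=
    Real.continuous_mul_log.comp continuous_fst
  exact ((continuousOn_const.mul hv').sub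
    (((hinner.comp continuous_snd).continuousOn.div_const _).mul (hslope.add hDv))).sub
    ((continuousOn_const.mul hlog.continuousOn).mul hDv)

theorem integral_flux_eq_integral_regularizedFlux {r c s : ℝ} {b : E2} {v g : E2 → ℝ}
    (hv : ContDiffOn ℝ 1 v (Metric.ball 0 r))
    (hg : ∀ x : E2, x ≠ 0 → ‖x‖ < r → g x = dipoleLogPotential b c x) (hs : s ∈ Ioo 0 r) :
    ∫ φ in 0..2 * π, (v (circlePt s φ) * radDeriv g (circlePt s φ)
        - g (circlePt s φ) * radDeriv v (circlePt s φ)) * s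
      = ∫ φ in 0..2 * π, regularizedFlux v b c s φ := by
  have hcont : Continuous (regularizedFlux v b c s) :=
    (continuousOn_regularizedFlux (hs.1.trans hs.2) hv b c).comp_continuous
      (continuous_const.prodMk continuous_id)
      fun _ => ⟨by simpa [abs_of_pos hs.1] using hs.2, trivial⟩
  simp_rw [flux_integrand_eq_regularizedFlux hg hs]
  rw [intervalIntegral.integral_sub (hcont.intervalIntegrable _ _)
    (Continuous.intervalIntegrable (by fun_prop) _ _), intervalIntegral.integral_const_mul,
    integral_inner_circlePt_one, mul_zero, sub_zero]

theorem integral_regularizedFlux_zero {v : E2 → ℝ} (hv : DifferentiableAt ℝ v 0) (b : E2)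
    (c : ℝ) :
    ∫ φ in 0..2 * π, regularizedFlux v b c 0 φ = c * v 0 - ⟪b, gradient v 0⟫ := by
  have h : ∀ φ, regularizedFlux v b c 0 φ
      = c / (2 * π) * v 0 - π⁻¹ * (⟪circlePt 1 φ, b⟫ * ⟪circlePt 1 φ, gradient v 0⟫) := by
    intro φ
    rw [regularizedFlux, dslope_same, ← fderiv_circlePt_one_eq_deriv (by simpa using hv),
      circlePt_zero, inner_gradient_right]
    simp only [zero_mul, mul_zero, sub_zero, conj_trivial]
    field_simp
    ring
  simp_rw [h]
  rw [intervalIntegral.integral_sub intervalIntegrable_const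
    (Continuous.intervalIntegrable (by fun_prop) _ _), intervalIntegral.integral_const,
    intervalIntegral.integral_const_mul, integral_inner_circlePt_one_mul_inner]
  have := pi_pos.ne'
  simp only [smul_eq_mul, sub_zero]
  field_simp

theorem circle_flux_limit
    (r : ℝ) (hr : 0 < r) (v : E2 → ℝ) (hv : ContDiffOn ℝ 1 v (Metric.ball 0 r))
    (M : Matrix (Fin 2) (Fin 2) ℝ) (a : E2) (c : ℝ)
    (g : E2 → ℝ)
    (hg : ∀ x : E2, x ≠ 0 → ‖x‖ < r →
      g x = ⟪x, matVec M a⟫ / (2 * π * ‖x‖ ^ 2) + (c / (2 * π)) * Real.log ‖x‖) :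
    Tendsto
      (fun s : ℝ => ∫ φ in (0:ℝ)..(2 * π),
        (v (circlePt s φ) * radDeriv g (circlePt s φ)
          - g (circlePt s φ) * radDeriv v (circlePt s φ)) * s)
      (𝓝[>] 0)
      (𝓝 (c * v 0 - ⟪matVec M a, gradient v 0⟫)) := by
  have hv0 : DifferentiableAt ℝ v 0 :=
    (hv.differentiableOn one_ne_zero).differentiableAt (Metric.ball_mem_nhds 0 hr)
  have hlim : Tendsto (fun s => ∫ φ in 0..2 * π, regularizedFlux v (matVec M a) c s φ)
      (𝓝[>] 0) (𝓝 (c * v 0 - ⟪matVec M a, gradient v 0⟫)) := by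
    rw [← integral_regularizedFlux_zero hv0]
    exact ((continuousOn_parametric_intervalIntegral_of_continuousOn
      (continuousOn_regularizedFlux hr hv _ c) 0 (2 * π)).continuousAt
        (Metric.ball_mem_nhds 0 hr)).tendsto.mono_left nhdsWithin_le_nhds
  refine hlim.congr' ?_
  filter_upwards [Ioo_mem_nhdsGT hr] with s hs
  exact (integral_flux_eq_integral_regularizedFlux hv hg hs).symm

end
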